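/- Let k : ℕ and let R ⊆ (Fin k → ℚ) be automorphism-closed and preserved by some ll operation. Then R is preserved by every lex operation. -/

import Mathlib

/-- A lex operation on ℚ. -/
def IsLex (f : ℚ → ℚ → ℚ) : Prop :=
  ∀ a a' b b' : ℚ, f a b < f a' b' ↔ (a < a' ∨ (a = a' ∧ b < b'))

/-- An ll operation on ℚ. -/
def IsLL (f : ℚ → ℚ → ℚ) : Prop :=
  ∀ a a' b b' : ℚ, f a b < f a' b' ↔
    ((a ≤ 0 ∧ a < a') ∨ (a = a' ∧ a ≤ 0 ∧ b < b') ∨ (0 < a ∧ 0 < a' ∧ b < b'))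

/-- A relation `R ⊆ (Fin k → ℚ)` is preserved by `f : ℚ → ℚ → ℚ`. -/
def Preserves {k : ℕ} (f : ℚ → ℚ → ℚ) (R : Set (Fin k → ℚ)) : Prop :=
  ∀ s ∈ R, ∀ t ∈ R, (fun j => f (s j) (t j)) ∈ R

/-- A relation is closed under all order-automorphisms of ℚ. -/
def AutoClosed {k : ℕ} (R : Set (Fin k → ℚ)) : Prop :=
  ∀ t ∈ R, ∀ α : ℚ → ℚ, StrictMono α → Function.Bijective α → (fun j => α (t j)) ∈ R

/-!
For `s t ∈ R`, subtracting an upper bound `c` of `s` is an automorphism, and on nonpositive first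
arguments an ll operation orders pairs lexicographically. Hence `f (s - c) t ∈ R` and `g s t` have
the same order type, and since ℚ is homogeneous (Cantor's back-and-forth argument) some
automorphism maps the first tuple onto the second.
-/

theorem cmp_eq_cmp_of_lt_iff_lt {α β : Type*} [LinearOrder α] [LinearOrder β] {x y : α}
    {x' y' : β} (h₁ : x < y ↔ x' < y') (h₂ : y < x ↔ y' < x') : cmp x y = cmp x' y' := by
  rcases lt_trichotomy x y with h | rfl | h
  · rw [h.cmp_eq_lt, (h₁.mp h).cmp_eq_lt]
  · rw [cmp_self_eq_eq, eq_comm, cmp_eq_eq_iff]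
    exact le_antisymm (not_lt.mp fun h => lt_irrefl x (h₂.mpr h))
      (not_lt.mp fun h => lt_irrefl x (h₁.mpr h))
  · rw [h.cmp_eq_gt, (h₂.mp h).cmp_eq_gt]

section BackAndForth

variable {α β : Type*} [LinearOrder α] [LinearOrder β]
  [Countable α] [DenselyOrdered α] [NoMinOrder α] [NoMaxOrder α] [Nonempty α]
  [Countable β] [DenselyOrdered β] [NoMinOrder β] [NoMaxOrder β] [Nonempty β]

open Order Order.PartialIso in
/-- The proof of `Order.iso_of_countable_dense`, with the generic ideal grown from `p` instead of
from the empty partial isomorphism. -/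
theorem Order.PartialIso.exists_orderIso_extending (p : PartialIso α β) :
    ∃ e : α ≃o β, ∀ x ∈ p.val, e x.1 = x.2 := by
  cases nonempty_encodable α
  cases nonempty_encodable β
  let to_cofinal : α ⊕ β → Cofinal (PartialIso α β) := fun x ↦
    Sum.recOn x (definedAtLeft β) (definedAtRight α)
  let I : Ideal (PartialIso α β) := idealOfCofinals p to_cofinal
  let F a := funOfIdeal a I (cofinal_meets_idealOfCofinals _ to_cofinal (Sum.inl a))
  let G b := invOfIdeal b I (cofinal_meets_idealOfCofinals _ to_cofinal (Sum.inr b))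
  refine ⟨OrderIso.ofCmpEqCmp (fun a ↦ (F a).val) (fun b ↦ (G b).val) fun a b ↦ ?_, ?_⟩
  · obtain ⟨f, hf, ha⟩ := (F a).prop
    obtain ⟨g, hg, hb⟩ := (G b).prop
    obtain ⟨m, -, fm, gm⟩ := I.directed _ hf _ hg
    exact m.prop (a, _) (fm ha) (_, b) (gm hb)
  · rintro ⟨a, b⟩ hab
    obtain ⟨f, hf, ha⟩ := (F a).prop
    obtain ⟨m, -, fm, pm⟩ := I.directed _ hf _ (mem_idealOfCofinals p to_cofinal)
    have := m.prop (a, _) (fm ha) (a, b) (pm hab)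
    rwa [cmp_self_eq_eq, eq_comm, cmp_eq_eq_iff] at this

theorem exists_orderIso_apply_eq_of_lt_iff_lt {ι : Type*} [Fintype ι] {u : ι → α} {v : ι → β}
    (h : ∀ i j, u i < u j ↔ v i < v j) : ∃ e : α ≃o β, ∀ i, e (u i) = v i := by
  classical
  let p : Order.PartialIso α β := ⟨Finset.univ.image fun i => (u i, v i), by
    simp only [Finset.mem_image, Finset.mem_univ, true_and]
    rintro _ ⟨i, rfl⟩ _ ⟨j, rfl⟩
    exact cmp_eq_cmp_of_lt_iff_lt (h i j) (h j i)⟩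
  obtain ⟨e, he⟩ := p.exists_orderIso_extending
  exact ⟨e, fun i => he (u i, v i) (Finset.mem_image_of_mem _ (Finset.mem_univ i))⟩

end BackAndForth

theorem AutoClosed.mem_of_lt_iff_lt {k : ℕ} {R : Set (Fin k → ℚ)} (hR : AutoClosed R)
    {u v : Fin k → ℚ} (hu : u ∈ R) (h : ∀ i j, u i < u j ↔ v i < v j) : v ∈ R := by
  obtain ⟨e, he⟩ := exists_orderIso_apply_eq_of_lt_iff_lt h
  simpa only [he] using hR u hu e e.strictMono e.bijective

theorem IsLL.lt_iff_of_nonpos {f : ℚ → ℚ → ℚ} (hf : IsLL f) {a a' : ℚ} (b b' : ℚ) (ha : a ≤ 0) :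
    f a b < f a' b' ↔ a < a' ∨ a = a' ∧ b < b' := by
  simp [hf a, ha, not_lt.mpr ha]

/-- An automorphism-closed relation preserved by some ll operation is preserved by every
lex operation. -/
theorem lex_preserved_of_ll_closed (k : ℕ) (R : Set (Fin k → ℚ))
    (hauto : AutoClosed R) (f : ℚ → ℚ → ℚ) (hf : IsLL f) (hR : Preserves f R) :
    ∀ g : ℚ → ℚ → ℚ, IsLex g → Preserves g R := by
  intro g hg s hs t ht
  obtain ⟨c, hc⟩ := Finite.exists_le s
  have hs' : (fun j => s j - c) ∈ R :=
    hauto.mem_of_lt_iff_lt hs fun i j => (sub_lt_sub_iff_right c).symm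
  refine hauto.mem_of_lt_iff_lt (hR _ hs' t ht) fun i j => ?_
  rw [hf.lt_iff_of_nonpos _ _ (sub_nonpos.mpr (hc i)), hg, sub_lt_sub_iff_right, sub_left_inj]
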